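/- arXiv:1301.5942 — 2 statements merged into one kernel-verified Lean document; each statement's English description precedes it below -/
import Mathlib

section
/- Let p and q be probability distributions on the finite product set {1,...,M_x} × {1,...,M_y} (with 2 ≤ M_x and 2 ≤ M_y), regarded as joint distributions of pairs of random variables (X,Y) and (X',Y') respectively. Set ε = V(p,q), the variational distance between p and q. If ε ≤ 2 − 2/(M_x·M_y), then |I(p) − I(q)| ≤ 3·(ε/2)·log(M_x·M_y − 1) + 3·ℋ(ε/2), where I denotes mutual information and ℋ is the binary entropy function (all logarithms natural). -/
open scoped BigOperators

/-- `p` is a probability distribution on the finite type `α`. -/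
def IsDist {α : Type*} [Fintype α] (p : α → ℝ) : Prop :=
  (∀ a, 0 ≤ p a) ∧ ∑ a, p a = 1

/-- Shannon entropy (natural logarithm, with `0 · log 0 = 0`). -/
noncomputable def entropy {α : Type*} [Fintype α] (p : α → ℝ) : ℝ :=
  -∑ a, p a * Real.log (p a)

/-- Variational distance between two distributions on the same finite set. -/
noncomputable def Vdist {α : Type*} [Fintype α] (p q : α → ℝ) : ℝ :=
  ∑ a, |p a - q a|

/-- First marginal of a joint distribution. -/
noncomputable def margX {Mx My : ℕ} (p : Fin Mx × Fin My → ℝ) : Fin Mx → ℝ :=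
  fun i => ∑ j, p (i, j)

/-- Second marginal of a joint distribution. -/
noncomputable def margY {Mx My : ℕ} (p : Fin Mx × Fin My → ℝ) : Fin My → ℝ :=
  fun j => ∑ i, p (i, j)

/-- Mutual information of a joint distribution. -/
noncomputable def mutInfo {Mx My : ℕ} (p : Fin Mx × Fin My → ℝ) : ℝ :=
  entropy (margX p) + entropy (margY p) - entropy p

/-- Binary entropy function. -/
noncomputable def binEnt (x : ℝ) : ℝ :=
  -x * Real.log x - (1 - x) * Real.log (1 - x)


/-!
Couple `p` and `q` maximally: keep `min p q` on the diagonal and spread the two excesses, each of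
mass `ε = V(p,q)/2`, independently off it. Fano's inequality for this coupling, whose error
probability is `ε`, gives `H(p) ≤ H(X,Y) ≤ H(q) + ε log(n - 1) + ℋ(ε)` on a set of size `n`.
The right side is increasing in `n`, and in `ε` up to `1 - 1/n`; since passing to a marginal
does not increase the variational distance, each of the three entropies in
`I = H(X) + H(Y) - H(X,Y)` moves by at most `ε log(Mx My - 1) + ℋ(ε)`.
-/

open Finset Real

section Entropy

variable {α β : Type*} [Fintype α] [Fintype β]

theorem entropy_le_neg_sum_mul_log {w r : α → ℝ} (hw : ∀ a, 0 ≤ w a) (hr : ∀ a, 0 ≤ r a)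
    (hsum : ∑ a, r a ≤ ∑ a, w a) (hpos : ∀ a, 0 < w a → 0 < r a) :
    entropy w ≤ -∑ a, w a * log (r a) := by
  have key : ∀ a ∈ univ, w a * log (r a) - w a * log (w a) ≤ r a - w a := by
    intro a _
    rcases (hw a).eq_or_lt with h | h
    · simpa [← h] using hr a
    · have hra := hpos a h
      calc w a * log (r a) - w a * log (w a) = w a * log (r a / w a) := by
            rw [log_div hra.ne' h.ne']; ring
        _ ≤ w a * (r a / w a - 1) := by gcongr; exact log_le_sub_one_of_pos (div_pos hra h)
        _ = r a - w a := by field_simp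
  have := sum_le_sum key
  rw [sum_sub_distrib, sum_sub_distrib] at this
  unfold entropy
  linarith

theorem entropy_fst_le {w : α × β → ℝ} (hw : ∀ x, 0 ≤ w x) :
    entropy (fun a => ∑ b, w (a, b)) ≤ entropy w := by
  unfold entropy
  rw [neg_le_neg_iff, Fintype.sum_prod_type]
  refine sum_le_sum fun a _ => ?_
  rw [sum_mul]
  refine sum_le_sum fun b _ => ?_
  rcases (hw (a, b)).eq_or_lt with h | h
  · simp [← h]
  · gcongr
    exact single_le_sum (fun b' _ => hw (a, b')) (mem_univ b)

end Entropy

section Vdist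

variable {α : Type*} [Fintype α]

theorem Vdist_nonneg (p q : α → ℝ) : 0 ≤ Vdist p q :=
  sum_nonneg fun _ _ => abs_nonneg _

theorem Vdist_comm (p q : α → ℝ) : Vdist p q = Vdist q p := by
  simp only [Vdist, abs_sub_comm]

theorem sum_min_eq_one_sub_half_Vdist {p q : α → ℝ} (hp : IsDist p) (hq : IsDist q) :
    ∑ a, min (p a) (q a) = 1 - Vdist p q / 2 := by
  have h : ∀ a, |p a - q a| = p a + q a - 2 * min (p a) (q a) := fun a => by
    rw [← max_sub_min_eq_abs', ← min_add_max (p a) (q a)]; ring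
  simp only [Vdist, h, sum_sub_distrib, sum_add_distrib, ← mul_sum, hp.2, hq.2]
  ring

theorem sum_sub_min_eq_half_Vdist {p q : α → ℝ} (hp : IsDist p) (hq : IsDist q) :
    ∑ a, (p a - min (p a) (q a)) = Vdist p q / 2 := by
  rw [sum_sub_distrib, hp.2, sum_min_eq_one_sub_half_Vdist hp hq]; ring

theorem sum_sub_min_eq_half_Vdist' {p q : α → ℝ} (hp : IsDist p) (hq : IsDist q) :
    ∑ a, (q a - min (p a) (q a)) = Vdist p q / 2 := by
  simp only [min_comm (p _), Vdist_comm p q, sum_sub_min_eq_half_Vdist hq hp]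

end Vdist

theorem mul_sum_div_sum_of_nonneg {ι : Type*} [Fintype ι] {f : ι → ℝ} (hf : ∀ i, 0 ≤ f i)
    (i : ι) : f i * (∑ j, f j) / ∑ j, f j = f i := by
  rcases eq_or_ne (∑ j, f j) 0 with h | h
  · simp [(sum_eq_zero_iff_of_nonneg fun j _ => hf j).mp h i (mem_univ i)]
  · field_simp

section MaximalCoupling

variable {α : Type*} [Fintype α] [DecidableEq α]

/-- The excesses `p - min p q` and `q - min p q` have disjoint supports and mass `V(p,q)/2`
each, so spreading their product off the diagonal keeps the marginals `p` and `q`. -/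
noncomputable def maximalCoupling (p q : α → ℝ) (x : α × α) : ℝ :=
  if x.1 = x.2 then min (p x.1) (q x.1)
  else (p x.1 - min (p x.1) (q x.1)) * (q x.2 - min (p x.2) (q x.2)) / (Vdist p q / 2)

variable {p q : α → ℝ}

theorem maximalCoupling_nonneg (hp : IsDist p) (hq : IsDist q) (x : α × α) :
    0 ≤ maximalCoupling p q x := by
  unfold maximalCoupling
  split_ifs
  · exact le_min (hp.1 _) (hq.1 _)
  · have := Vdist_nonneg p q
    have := min_le_left (p x.1) (q x.1)
    have := min_le_right (p x.2) (q x.2)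
    positivity

theorem maximalCoupling_eq_add_ite (p q : α → ℝ) (a b : α) :
    maximalCoupling p q (a, b) =
      (p a - min (p a) (q a)) * (q b - min (p b) (q b)) / (Vdist p q / 2) +
        if a = b then min (p a) (q a) else 0 := by
  unfold maximalCoupling
  split_ifs with h
  · simp only at h
    subst h
    rcases le_total (p a) (q a) with h | h <;> simp [h]
  · simp

theorem sum_maximalCoupling_fst (hp : IsDist p) (hq : IsDist q) (a : α) :
    ∑ b, maximalCoupling p q (a, b) = p a := by
  simp only [maximalCoupling_eq_add_ite, sum_add_distrib, sum_ite_eq, mem_univ, if_true,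
    ← sum_div, ← mul_sum]
  rw [sum_sub_min_eq_half_Vdist' hp hq, ← sum_sub_min_eq_half_Vdist hp hq,
    mul_sum_div_sum_of_nonneg fun b => sub_nonneg.mpr (min_le_left _ _)]
  ring

theorem sum_maximalCoupling_snd (hp : IsDist p) (hq : IsDist q) (b : α) :
    ∑ a, maximalCoupling p q (a, b) = q b := by
  simp only [maximalCoupling_eq_add_ite, sum_add_distrib, sum_ite_eq', mem_univ, if_true,
    ← sum_div, ← sum_mul]
  rw [sum_sub_min_eq_half_Vdist hp hq, ← sum_sub_min_eq_half_Vdist' hp hq, mul_comm,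
    mul_sum_div_sum_of_nonneg fun b => sub_nonneg.mpr (min_le_right _ _)]
  ring

theorem sum_offDiag_maximalCoupling (hp : IsDist p) (hq : IsDist q) :
    ∑ x with x.1 ≠ x.2, maximalCoupling p q x = Vdist p q / 2 := by
  have htotal : ∑ x, maximalCoupling p q x = 1 := by
    simp only [Fintype.sum_prod_type, sum_maximalCoupling_fst hp hq, hp.2]
  have hdiag : ∑ x with x.1 = x.2, maximalCoupling p q x = 1 - Vdist p q / 2 := by
    simp only [sum_filter, Fintype.sum_prod_type, sum_ite_eq, mem_univ, if_true]
    simp [maximalCoupling, sum_min_eq_one_sub_half_Vdist hp hq]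
  rw [← sum_filter_add_sum_filter_not univ (fun x : α × α => x.1 = x.2), hdiag] at htotal
  linarith

end MaximalCoupling

theorem qaryEntropy_eq_neg {n : ℕ} (hn : 1 < n) (e : ℝ) :
    qaryEntropy n e = -((1 - e) * log (1 - e) + e * log (e / (n - 1))) := by
  have : (1 : ℝ) < n := by exact_mod_cast hn
  unfold qaryEntropy binEntropy
  push_cast
  rcases eq_or_ne e 0 with h | h
  · simp [h]
  · rw [log_div h (by linarith), log_inv, log_inv]; ring

theorem sum_mul_log_mul {ι : Type*} [Fintype ι] {w f g : ι → ℝ} (hw : ∀ i, 0 ≤ w i)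
    (hfg : ∀ i, 0 < w i → 0 < f i ∧ 0 < g i) :
    ∑ i, w i * log (f i * g i) = ∑ i, w i * log (f i) + ∑ i, w i * log (g i) := by
  rw [← sum_add_distrib]
  refine sum_congr rfl fun i _ => ?_
  rcases (hw i).eq_or_lt with h | h
  · simp [← h]
  · rw [log_mul (hfg i h).1.ne' (hfg i h).2.ne']; ring

section Fano

variable {α : Type*} [Fintype α] [DecidableEq α]

/-- The conditional law of `X` given `Y` in the extremal case of Fano's inequality with error
probability `e`. -/
noncomputable def fanoKernel (e : ℝ) (x : α × α) : ℝ :=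
  if x.1 = x.2 then 1 - e else e / (Fintype.card α - 1)

variable [Nontrivial α]

theorem sum_fanoKernel (e : ℝ) (b : α) : ∑ a, fanoKernel e (a, b) = 1 := by
  have : (1 : ℝ) < Fintype.card α := by exact_mod_cast Fintype.one_lt_card
  simp only [fanoKernel, sum_ite, filter_eq', filter_ne', mem_univ, if_true, sum_const,
    card_singleton, card_erase_of_mem, card_univ, one_smul, nsmul_eq_mul]
  rw [Nat.cast_sub Fintype.card_pos, Nat.cast_one, mul_div_cancel₀ _ (by linarith)]
  ring

theorem entropy_le_entropy_add_qaryEntropy {w : α × α → ℝ} {q : α → ℝ} (hw : ∀ x, 0 ≤ w x)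
    (hq : ∀ b, ∑ a, w (a, b) = q b) (hq1 : ∑ b, q b = 1) :
    entropy w ≤ entropy q + qaryEntropy (Fintype.card α) (∑ x with x.1 ≠ x.2, w x) := by
  set e := ∑ x with x.1 ≠ x.2, w x
  set u : α × α → ℝ := fanoKernel e
  have hc : (1 : ℝ) < Fintype.card α := by exact_mod_cast Fintype.one_lt_card
  have hwq : ∀ x, w x ≤ q x.2 := fun x => by
    rw [← hq]; exact single_le_sum (fun a _ => hw (a, x.2)) (mem_univ x.1)
  have hdiag : ∑ x with x.1 = x.2, w x = 1 - e := by
    have : ∑ x, w x = 1 := by simp only [Fintype.sum_prod_type_right, hq, hq1]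
    rw [← sum_filter_add_sum_filter_not univ (fun x : α × α => x.1 = x.2)] at this
    linarith
  have hle_diag : ∀ x, x.1 = x.2 → w x ≤ 1 - e := fun x h =>
    hdiag ▸ single_le_sum (fun y _ => hw y) (by simpa using h)
  have hle_off : ∀ x, x.1 ≠ x.2 → w x ≤ e := fun x h =>
    single_le_sum (fun y _ => hw y) (by simpa using h)
  have hu_pos : ∀ x, 0 < w x → 0 < u x := fun x hx => by
    by_cases h : x.1 = x.2
    · simpa [u, fanoKernel, h] using hx.trans_le (hle_diag x h)
    · simpa [u, fanoKernel, h] using div_pos (hx.trans_le (hle_off x h)) (by linarith)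
  have hu_nonneg : ∀ x, 0 ≤ u x := fun x => by
    have := hle_diag (x.2, x.2) rfl
    have : 0 ≤ e := sum_nonneg fun y _ => hw y
    by_cases h : x.1 = x.2
    · simp only [u, fanoKernel, if_pos h]; linarith [hw (x.2, x.2)]
    · simp only [u, fanoKernel, if_neg h]; exact div_nonneg this (by linarith)
  have hgibbs := entropy_le_neg_sum_mul_log (r := fun x => q x.2 * u x) hw
    (fun x => mul_nonneg ((hw x).trans (hwq x)) (hu_nonneg x))
    (by simp only [Fintype.sum_prod_type_right, hq, ← mul_sum, u, sum_fanoKernel, mul_one]; rfl)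
    (fun x hx => mul_pos (hx.trans_le (hwq x)) (hu_pos x hx))
  have hq_term : ∑ x, w x * log (q x.2) = -entropy q := by
    simp only [entropy, Fintype.sum_prod_type_right, ← sum_mul, hq, neg_neg]
  have hu_term : ∑ x, w x * log (u x) = -qaryEntropy (Fintype.card α) e := calc
    _ = ∑ x with x.1 = x.2, w x * log (1 - e) +
          ∑ x with x.1 ≠ x.2, w x * log (e / (Fintype.card α - 1)) := by
      rw [← sum_filter_add_sum_filter_not univ (fun x : α × α => x.1 = x.2)]
      congr 1 <;> refine sum_congr rfl fun x hx => ?_ <;> simp_all [u, fanoKernel]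
    _ = _ := by rw [← sum_mul, ← sum_mul, hdiag, qaryEntropy_eq_neg Fintype.one_lt_card, neg_neg]
  rw [sum_mul_log_mul hw fun x hx => ⟨hx.trans_le (hwq x), hu_pos x hx⟩, hq_term, hu_term]
    at hgibbs
  linarith

end Fano

section EntropyContinuity

variable {α : Type*} [Fintype α] [Nontrivial α] {p q : α → ℝ}

theorem entropy_sub_le_qaryEntropy (hp : IsDist p) (hq : IsDist q) :
    entropy p - entropy q ≤ qaryEntropy (Fintype.card α) (Vdist p q / 2) := by
  classical
  have hw := maximalCoupling_nonneg hp hq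
  rw [sub_le_iff_le_add']
  calc entropy p = entropy fun a => ∑ b, maximalCoupling p q (a, b) := by
        simp only [sum_maximalCoupling_fst hp hq]
    _ ≤ entropy (maximalCoupling p q) := entropy_fst_le hw
    _ ≤ entropy q + qaryEntropy (Fintype.card α) (Vdist p q / 2) := by
        simpa only [sum_offDiag_maximalCoupling hp hq] using
          entropy_le_entropy_add_qaryEntropy hw (sum_maximalCoupling_snd hp hq) hq.2

theorem abs_entropy_sub_le_qaryEntropy (hp : IsDist p) (hq : IsDist q) :
    |entropy p - entropy q| ≤ qaryEntropy (Fintype.card α) (Vdist p q / 2) := by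
  rw [abs_sub_le_iff]
  exact ⟨entropy_sub_le_qaryEntropy hp hq, Vdist_comm p q ▸ entropy_sub_le_qaryEntropy hq hp⟩

end EntropyContinuity

theorem qaryEntropy_le_qaryEntropy {n N : ℕ} {x y : ℝ} (hn : 2 ≤ n) (hnN : n ≤ N) (hx : 0 ≤ x)
    (hxy : x ≤ y) (hy : y ≤ 1 - 1 / N) : qaryEntropy n x ≤ qaryEntropy N y := by
  have hn' : (2 : ℝ) ≤ n := by exact_mod_cast hn
  have hnN' : (n : ℝ) ≤ N := by exact_mod_cast hnN
  calc qaryEntropy n x ≤ qaryEntropy N x := by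
        unfold qaryEntropy
        push_cast
        gcongr
        linarith
    _ ≤ qaryEntropy N y := (qaryEntropy_strictMonoOn (hn.trans hnN)).monotoneOn
        ⟨hx, hxy.trans hy⟩ ⟨hx.trans hxy, hy⟩ hxy

theorem abs_entropy_sub_le_qaryEntropy_of_le {α : Type*} [Fintype α] [Nontrivial α]
    {p q : α → ℝ} (hp : IsDist p) (hq : IsDist q) {N : ℕ} (hN : Fintype.card α ≤ N) {ε : ℝ}
    (hV : Vdist p q / 2 ≤ ε) (hε : ε ≤ 1 - 1 / N) :
    |entropy p - entropy q| ≤ qaryEntropy N ε :=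
  (abs_entropy_sub_le_qaryEntropy hp hq).trans <| qaryEntropy_le_qaryEntropy
    Fintype.one_lt_card hN (by linarith [Vdist_nonneg p q]) hV hε

section Marginals

variable {Mx My : ℕ} {p : Fin Mx × Fin My → ℝ}

theorem IsDist.margX (hp : IsDist p) : IsDist (margX p) :=
  ⟨fun _ => sum_nonneg fun _ _ => hp.1 _, by rw [← hp.2, Fintype.sum_prod_type]; rfl⟩

theorem IsDist.margY (hp : IsDist p) : IsDist (margY p) :=
  ⟨fun _ => sum_nonneg fun _ _ => hp.1 _, by rw [← hp.2, Fintype.sum_prod_type_right]; rfl⟩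

theorem Vdist_margX_le (p q : Fin Mx × Fin My → ℝ) : Vdist (margX p) (margX q) ≤ Vdist p q := by
  rw [Vdist, Vdist, Fintype.sum_prod_type]
  exact sum_le_sum fun i _ => by
    simpa only [margX, ← sum_sub_distrib] using abs_sum_le_sum_abs _ _

theorem Vdist_margY_le (p q : Fin Mx × Fin My → ℝ) : Vdist (margY p) (margY q) ≤ Vdist p q := by
  rw [Vdist, Vdist, Fintype.sum_prod_type_right]
  exact sum_le_sum fun j _ => by
    simpa only [margY, ← sum_sub_distrib] using abs_sum_le_sum_abs _ _

end Marginals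

theorem binEnt_eq_binEntropy (x : ℝ) : binEnt x = binEntropy x := by
  simp only [binEnt, binEntropy, log_inv]; ring

/-- Zhang's bound, Lemma 1: if `ε = V(p,q) ≤ 2 - 2/(Mx·My)` then
`|I(p) - I(q)| ≤ 3·(ε/2)·log(Mx·My - 1) + 3·ℋ(ε/2)`. -/
theorem mutInfo_diff_le_of_Vdist_eq {Mx My : ℕ} (hMx : 2 ≤ Mx) (hMy : 2 ≤ My)
    (p q : Fin Mx × Fin My → ℝ) (hp : IsDist p) (hq : IsDist q)
    (hV : Vdist p q ≤ 2 - 2 / ((Mx : ℝ) * My)) :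
    |mutInfo p - mutInfo q| ≤
      3 * (Vdist p q / 2) * Real.log ((Mx : ℝ) * My - 1) + 3 * binEnt (Vdist p q / 2) := by
  have : Nontrivial (Fin Mx) := Fin.nontrivial_iff_two_le.mpr hMx
  have : Nontrivial (Fin My) := Fin.nontrivial_iff_two_le.mpr hMy
  set ε := Vdist p q / 2 with hε_def
  have hε : ε ≤ 1 - 1 / ((Mx * My : ℕ) : ℝ) := by
    have : 2 / ((Mx : ℝ) * My) = 2 * (1 / ((Mx : ℝ) * My)) := by ring
    push_cast; linarith
  have hX := abs_entropy_sub_le_qaryEntropy_of_le hp.margX hq.margX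
    (by simpa using Nat.le_mul_of_pos_right Mx (by omega))
    (by linarith [Vdist_margX_le p q, hε_def]) hε
  have hY := abs_entropy_sub_le_qaryEntropy_of_le hp.margY hq.margY
    (by simpa using Nat.le_mul_of_pos_left My (by omega))
    (by linarith [Vdist_margY_le p q, hε_def]) hε
  have hXY := abs_entropy_sub_le_qaryEntropy_of_le hp hq (by simp) le_rfl hε
  have hRHS : 3 * ε * log ((Mx : ℝ) * My - 1) + 3 * binEnt ε = 3 * qaryEntropy (Mx * My) ε := by
    simp only [qaryEntropy, binEnt_eq_binEntropy]; push_cast; ring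
  calc |mutInfo p - mutInfo q|
      = |(entropy (margX p) - entropy (margX q)) + (entropy (margY p) - entropy (margY q))
          - (entropy p - entropy q)| := by unfold mutInfo; ring_nf
    _ ≤ |entropy (margX p) - entropy (margX q)| + |entropy (margY p) - entropy (margY q)|
          + |entropy p - entropy q| := (abs_sub _ _).trans (by gcongr; exact abs_add_le _ _)
    _ ≤ _ := by rw [hRHS]; linarith
end

section
/- Fix integers 2 ≤ M_x ≤ M_y. The function f(ε) = (ε/2)·log[(M_x·M_y − 1)(M_x − 1)(M_y − 1)] + 3·ℋ(ε/2) is strictly increasing on the interval ε ∈ (0, 2 − 2/M_x). -/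
open scoped BigOperators

/-!
With `t = ε / 2` the function is `t ↦ t L + 3 ℋ(t)`, `L = log ((Mx My - 1)(Mx - 1)(My - 1))`,
whose derivative is `L - 3 (log t - log (1 - t))`. The log-odds `log t - log (1 - t)` increase in
`t`, and at the right end point `t = 1 - 1/Mx` they equal `log (Mx - 1)`; since `Mx ≤ My`, the
product inside `L` is at least `(Mx - 1)³`, so the derivative is positive on the whole interval.
-/

open Real Set

theorem hasDerivAt_binEnt {x : ℝ} (hx0 : 0 < x) (hx1 : x < 1) :
    HasDerivAt binEnt (log (1 - x) - log x) x := by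
  have hlog : HasDerivAt (fun y => y * log y) (log x + 1) x := hasDerivAt_mul_log hx0.ne'
  have hlog₁ : HasDerivAt (fun y => (1 - y) * log (1 - y)) ((log (1 - x) + 1) * (-1)) x :=
    (hasDerivAt_mul_log (sub_pos.2 hx1).ne').comp x ((hasDerivAt_id x).const_sub 1)
  refine ((hlog.neg.sub hlog₁).congr_deriv (by ring)).congr_of_eventuallyEq
    (Filter.Eventually.of_forall fun y => ?_)
  simp only [binEnt, Pi.neg_apply, Pi.sub_apply]
  ring

theorem strictMonoOn_mul_add_mul_binEnt {L c b : ℝ} (hc : 0 < c) (hb : b < 1)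
    (hL : c * (log b - log (1 - b)) ≤ L) :
    StrictMonoOn (fun t => t * L + c * binEnt t) (Ioo 0 b) := by
  have hderiv : ∀ t ∈ Ioo 0 b, HasDerivAt (fun t => t * L + c * binEnt t)
      (L + c * (log (1 - t) - log t)) t := fun t ht =>
    (((hasDerivAt_id t).mul_const L).add
      ((hasDerivAt_binEnt ht.1 (ht.2.trans hb)).const_mul c)).congr_deriv (by simp)
  refine strictMonoOn_of_deriv_pos (convex_Ioo 0 b)
    (fun t ht => (hderiv t ht).continuousAt.continuousWithinAt) fun t ht => ?_
  rw [interior_Ioo] at ht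
  rw [(hderiv t ht).deriv]
  have hlog_lt : log t < log b := log_lt_log ht.1 ht.2
  have hlog_one_sub_lt : log (1 - b) < log (1 - t) :=
    log_lt_log (sub_pos.2 hb) (by linarith [ht.2])
  nlinarith

theorem log_one_sub_inv_sub_log_inv {x : ℝ} (hx : 1 < x) :
    log (1 - x⁻¹) - log (1 - (1 - x⁻¹)) = log (x - 1) := by
  have hx0 : x ≠ 0 := by positivity
  rw [sub_sub_cancel, ← log_div (by simp [sub_eq_zero, hx.ne']) (by simpa using hx0)]
  congr 1
  field_simp

theorem three_mul_log_sub_one_le {x y : ℝ} (hx : 1 < x) (hxy : x ≤ y) :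
    3 * log (x - 1) ≤ log ((x * y - 1) * (x - 1) * (y - 1)) := by
  have hx_le_mul : x - 1 ≤ x * y - 1 := by nlinarith
  calc 3 * log (x - 1) = log ((x - 1) ^ 3) := by rw [log_pow]; norm_num
    _ ≤ _ := log_le_log (pow_pos (sub_pos.2 hx) 3) ?_
  have hx₁ : 0 ≤ x - 1 := by linarith
  have hprod : 0 ≤ (x * y - 1) * (x - 1) := mul_nonneg (hx₁.trans hx_le_mul) hx₁
  calc (x - 1) ^ 3 = (x - 1) * (x - 1) * (x - 1) := by ring
    _ ≤ (x * y - 1) * (x - 1) * (y - 1) := by gcongr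

/-- the bound `ε ↦ (ε/2)·log[(Mx·My-1)(Mx-1)(My-1)] + 3·ℋ(ε/2)` is
strictly increasing on `(0, 2 - 2/Mx)`. -/
theorem strictMonoOn_bound {Mx My : ℕ} (hMx : 2 ≤ Mx) (hMxy : Mx ≤ My) :
    StrictMonoOn
      (fun ε : ℝ =>
        ε / 2 * Real.log (((Mx : ℝ) * My - 1) * ((Mx : ℝ) - 1) * ((My : ℝ) - 1)) +
          3 * binEnt (ε / 2))
      (Set.Ioo 0 (2 - 2 / (Mx : ℝ))) := by
  have hMx' : (1 : ℝ) < Mx := by exact_mod_cast hMx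
  have hMxy' : (Mx : ℝ) ≤ My := by exact_mod_cast hMxy
  have hhalf : StrictMono fun ε : ℝ => ε / 2 := fun _ _ h => by linarith
  have hmaps : MapsTo (fun ε : ℝ => ε / 2) (Ioo 0 (2 - 2 / (Mx : ℝ))) (Ioo 0 (1 - (Mx : ℝ)⁻¹)) :=
    fun ε ⟨h0, h1⟩ => ⟨half_pos h0, by
      rw [div_eq_mul_inv] at h1
      dsimp only
      linarith⟩
  refine StrictMonoOn.comp (g := fun t => t * _ + 3 * binEnt t)
    (strictMonoOn_mul_add_mul_binEnt three_pos (by simp; positivity) ?_) (hhalf.strictMonoOn _) hmaps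
  rw [log_one_sub_inv_sub_log_inv hMx']
  exact three_mul_log_sub_one_le hMx' hMxy'
end
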